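/- arXiv:1410.8567 — 4 statements merged into one kernel-verified Lean document; each statement's English description precedes it below -/
import Mathlib

section
/- Let A ∈ M_n(ℂ) be a single-eigenvalue Jordan matrix with eigenvalue 0 (so A is nilpotent, and A ∈ Ω_n). Let Φ : D → Ω_n be holomorphic with Φ(0) = A, and write φ = (φ_1,…,φ_n) := π∘Φ. Then for every 1 ≤ i ≤ n the coordinate function φ_i satisfies φ_i(ζ) = O(ζ^{d_i(A)}) at 0. -/
open Polynomial

noncomputable section

/-- The open unit disc in `ℂ`. -/
def unitDisc : Set ℂ := Metric.ball 0 1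

/-- `g(ζ) = O((ζ-α)^d)` at `α`: for a function holomorphic near `α`, vanishing
to order at least `d`, i.e. all derivatives of order `< d` vanish at `α`. -/
def VanishesToOrder (g : ℂ → ℂ) (α : ℂ) (d : ℕ) : Prop :=
  ∀ i < d, iteratedDeriv i g α = 0

/-- The map `π : M_n(ℂ) → ℂ^n`, `π(A) = (σ_1(A), …, σ_n(A))`, where
`det(tI - A) = ∑_{j=0}^n (-1)^j σ_j(A) t^{n-j}`.  Index `i : Fin n` stands for `j = i+1`. -/
def piCoef (n : ℕ) (A : Matrix (Fin n) (Fin n) ℂ) : Fin n → ℂ :=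
  fun i => (-1 : ℂ) ^ ((i : ℕ) + 1) * (Matrix.charpoly A).coeff (n - ((i : ℕ) + 1))

/-- The spectral ball `Ω_n`: matrices whose eigenvalues (roots of the characteristic
polynomial) all have modulus `< 1`. -/
def SpectralBall (n : ℕ) : Set (Matrix (Fin n) (Fin n) ℂ) :=
  { A | ∀ z ∈ (Matrix.charpoly A).roots, ‖z‖ < 1 }

/-- The symmetrized polydisc `G_n = π(Ω_n)`. -/
def SymPolydisc (n : ℕ) : Set (Fin n → ℂ) := piCoef n '' SpectralBall n

/-- `P_{[v]}(t) = t^n + ∑_{j=1}^n (-1)^j v_j t^{n-j}`. -/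
def Pv (n : ℕ) (v : Fin n → ℂ) : Polynomial ℂ :=
  X ^ n + ∑ i : Fin n, C ((-1 : ℂ) ^ ((i : ℕ) + 1) * v i) * X ^ (n - ((i : ℕ) + 1))

/-- `k`-th derivative of a polynomial with respect to the indeterminate. -/
def polyDeriv (k : ℕ) (P : Polynomial ℂ) : Polynomial ℂ :=
  (fun Q : Polynomial ℂ => Polynomial.derivative Q)^[k] P

/-- A matrix is cyclic (non-derogatory) if some vector has iterates spanning `ℂ^n`. -/
def IsCyclicMatrix {n : ℕ} (M : Matrix (Fin n) (Fin n) ℂ) : Prop :=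
  ∃ v : Fin n → ℂ, Submodule.span ℂ { w : Fin n → ℂ | ∃ k : ℕ, w = (M ^ k).mulVec v } = ⊤

open scoped Classical in
/-- `d_i(B) = 1 + #{ j : m-i+2 ≤ j ≤ m, B_{j-1,j} = 0 }` (1-indexed entries). -/
def dIdx {m : ℕ} (B : Matrix (Fin m) (Fin m) ℂ) (i : ℕ) : ℕ :=
  1 + ((Finset.Icc (m - i + 2) m).filter
      (fun j => ∀ (h1 : j - 2 < m) (h2 : j - 1 < m), B ⟨j - 2, h1⟩ ⟨j - 1, h2⟩ = 0)).card

open scoped Classical in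
/-- A single-eigenvalue Jordan matrix with eigenvalue `lam`: diagonal entries `lam`,
superdiagonal entries `0` or `1`, all other entries `0`, and the sizes of the consecutive
Jordan blocks (delimited by the vanishing superdiagonal entries) nondecreasing.
The list `L` records the consecutive Jordan block sizes; the superdiagonal entry in
(0-indexed) column `j` vanishes exactly when `j` is a proper partial sum of `L`. -/
def IsSingleJordan {m : ℕ} (B : Matrix (Fin m) (Fin m) ℂ) (lam : ℂ) : Prop :=
  (∀ i, B i i = lam) ∧
  (∀ i j : Fin m, (j : ℕ) ≠ (i : ℕ) → (j : ℕ) ≠ (i : ℕ) + 1 → B i j = 0) ∧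
  ∃ L : List ℕ, (∀ x ∈ L, 0 < x) ∧ L.sum = m ∧ L.Pairwise (· ≤ ·) ∧
    ∀ i j : Fin m, (j : ℕ) = (i : ℕ) + 1 →
      B i j = if (∃ t, 0 < t ∧ t < L.length ∧ (L.take t).sum = (j : ℕ)) then 0 else 1

/-- Partial sums `n_t = m_1 + ⋯ + m_t` of block sizes. -/
def nsum {s : ℕ} (m : Fin s → ℕ) (t : ℕ) : ℕ :=
  ∑ j ∈ Finset.univ.filter (fun j : Fin s => (j : ℕ) < t), m j

/-- `A = diag(B_1, …, B_s)` is a block Jordan matrix with single-eigenvalue Jordan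
blocks `B j` of size `m j` and pairwise distinct eigenvalues `lam j`. -/
def IsBlockJordan {n s : ℕ} (m : Fin s → ℕ) (lam : Fin s → ℂ)
    (B : ∀ j : Fin s, Matrix (Fin (m j)) (Fin (m j)) ℂ)
    (A : Matrix (Fin n) (Fin n) ℂ) : Prop :=
  (∑ j, m j) = n ∧ Function.Injective lam ∧ (∀ j, 0 < m j) ∧
  (∀ j, IsSingleJordan (B j) (lam j)) ∧
  (∀ (j : Fin s) (a b : Fin (m j)) (h1 : nsum m (j : ℕ) + (a : ℕ) < n)
      (h2 : nsum m (j : ℕ) + (b : ℕ) < n),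
      A ⟨nsum m (j : ℕ) + (a : ℕ), h1⟩ ⟨nsum m (j : ℕ) + (b : ℕ), h2⟩ = B j a b) ∧
  (∀ (i k : Fin n) (j j' : Fin s), j ≠ j' →
      nsum m (j : ℕ) ≤ (i : ℕ) → (i : ℕ) < nsum m ((j : ℕ) + 1) →
      nsum m (j' : ℕ) ≤ (k : ℕ) → (k : ℕ) < nsum m ((j' : ℕ) + 1) →
      A i k = 0)

/-- The conditions (★) at `α` relative to a block Jordan matrix with data `m, lam, B`:
`(d^k P_{[φ(ζ)]}/dt^k)(λ_j) = O((ζ-α)^{d_{m_j-k}(B_j)})` for `1 ≤ j ≤ s`, `0 ≤ k ≤ m_j - 1`. -/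
def StarConditions {n s : ℕ} (m : Fin s → ℕ) (lam : Fin s → ℂ)
    (B : ∀ j : Fin s, Matrix (Fin (m j)) (Fin (m j)) ℂ)
    (φ : ℂ → Fin n → ℂ) (α : ℂ) : Prop :=
  ∀ (j : Fin s), ∀ k < m j,
    VanishesToOrder (fun ζ => (polyDeriv k (Pv n (φ ζ))).eval (lam j)) α
      (dIdx (B j) (m j - k))

/-- Sum of all monomials of degree `d` in `k` variables (complete homogeneous symmetric sum). -/
def homogSum (k d : ℕ) (x : Fin k → ℂ) : ℂ :=
  ∑ c ∈ Finset.Nat.antidiagonalTuple k d, ∏ i, x i ^ c i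

/-- Divided difference `Δ^k P (x_1, …, x_{k+1}) = ∑_{j≥k} a_j ∑_{i_1+⋯+i_{k+1}=j-k} x^i`. -/
def divDiff (P : Polynomial ℂ) (k : ℕ) (x : Fin (k + 1) → ℂ) : ℂ :=
  ∑ j ∈ Finset.Icc k P.natDegree, P.coeff j * homogSum (k + 1) (j - k) x

/-- The Lempert function of the spectral ball. -/
def lempertOmega (n : ℕ) (A B : Matrix (Fin n) (Fin n) ℂ) : ℝ :=
  sInf { r : ℝ | ∃ α ∈ unitDisc, r = ‖α‖ ∧
    ∃ Φ : ℂ → Matrix (Fin n) (Fin n) ℂ,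
      (∀ i j, DifferentiableOn ℂ (fun ζ => Φ ζ i j) unitDisc) ∧
      Set.MapsTo Φ unitDisc (SpectralBall n) ∧ Φ α = A ∧ Φ 0 = B }

/-- The matrix `B_k^λ(ζ)`. -/
def Bmat (k : ℕ) (lam ζ : ℂ) : Matrix (Fin k) (Fin k) ℂ :=
  Matrix.of fun i j =>
    if (j : ℕ) = (i : ℕ) then lam
    else if (j : ℕ) = (i : ℕ) + 1 then (if (i : ℕ) = k - 2 then 1 else ζ)
    else if (i : ℕ) = k - 1 ∧ (j : ℕ) = 0 then ζ
    else 0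

/-- The block diagonal matrix `diag(B_k^{λ_1}(ζ), B_l^{λ_2}(ζ))` as an `(k+l)×(k+l)` matrix. -/
def BmatPair (k l : ℕ) (lam1 lam2 ζ : ℂ) : Matrix (Fin (k + l)) (Fin (k + l)) ℂ :=
  Matrix.reindex finSumFinEquiv finSumFinEquiv
    (Matrix.fromBlocks (Bmat k lam1 ζ) 0 0 (Bmat l lam2 ζ))

end

/-!
Write `Φ ζ = A + ζ • Ψ ζ`. The coefficient `σ_i(Φ ζ)` is the sum of the principal `i × i` minors
of `Φ ζ`. In the minor on an index set `s`, every row of `A` restricted to `s` that vanishes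
is a row of `Φ ζ` divisible by `ζ`, so the minor vanishes at `0` to order at least the number of
such zero rows. Every Jordan block of `A` meeting `s` contributes one, namely its last index in
`s`. Since the block sizes are nondecreasing, `i` positions meet at least as many blocks as the
last `i` positions do, and that number is `d_i(A)`.
-/

open Finset

section AnalyticOrder

variable {𝕜 : Type*} [NontriviallyNormedField 𝕜] {z₀ : 𝕜}

theorem AnalyticAt.dslope {E : Type*} [NormedAddCommGroup E] [NormedSpace 𝕜 E] {f : 𝕜 → E}
    (hf : AnalyticAt 𝕜 f z₀) : AnalyticAt 𝕜 (dslope f z₀) z₀ :=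
  let ⟨_, hp⟩ := hf
  ⟨_, hp.has_fpower_series_dslope_fslope⟩

theorem AnalyticAt.matrix_det {ι : Type*} [Fintype ι] [DecidableEq ι] {M : 𝕜 → Matrix ι ι 𝕜}
    (hM : ∀ p q, AnalyticAt 𝕜 (fun z => M z p q) z₀) :
    AnalyticAt 𝕜 (fun z => (M z).det) z₀ := by
  simp only [Matrix.det_apply, Units.smul_def, zsmul_eq_mul]
  fun_prop

theorem le_analyticOrderAt_finsetSum {E : Type*} [NormedAddCommGroup E] [NormedSpace 𝕜 E]
    {ι : Type*} (s : Finset ι) {f : ι → 𝕜 → E} {m : ℕ∞}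
    (h : ∀ i ∈ s, m ≤ analyticOrderAt (f i) z₀) :
    m ≤ analyticOrderAt (fun z => ∑ i ∈ s, f i z) z₀ := by
  classical
  induction s using Finset.induction_on with
  | empty => simp [analyticOrderAt_eq_top.2]
  | insert i s hi ih =>
    simp only [Finset.sum_insert hi]
    exact le_trans (le_min (h i (mem_insert_self i s)) (ih fun j hj => h j (mem_insert_of_mem hj)))
      (le_analyticOrderAt_add (f := f i) (g := fun z => ∑ j ∈ s, f j z))

theorem natCast_card_le_analyticOrderAt_det {ι : Type*} [Fintype ι] [DecidableEq ι]
    {M : 𝕜 → Matrix ι ι 𝕜} (hM : ∀ p q, AnalyticAt 𝕜 (fun z => M z p q) z₀) (Z : Finset ι)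
    (hZ : ∀ p ∈ Z, ∀ q, M z₀ p q = 0) :
    (#Z : ℕ∞) ≤ analyticOrderAt (fun z => (M z).det) z₀ := by
  let M' : 𝕜 → Matrix ι ι 𝕜 := fun z p q =>
    if p ∈ Z then dslope (fun z => M z p q) z₀ z else M z p q
  have hM' : ∀ p q, AnalyticAt 𝕜 (fun z => M' z p q) z₀ := by
    intro p q
    by_cases hp : p ∈ Z
    · simpa [M', hp] using (hM p q).dslope
    · simpa [M', hp] using hM p q
  rw [natCast_le_analyticOrderAt (AnalyticAt.matrix_det hM)]
  refine ⟨fun z => (M' z).det, AnalyticAt.matrix_det hM', .of_forall fun z => ?_⟩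
  have hrows : M z = Matrix.of fun p q => (if p ∈ Z then z - z₀ else 1) * M' z p q := by
    ext p q
    by_cases hp : p ∈ Z
    · have := sub_smul_dslope (fun z => M z p q) z₀ z
      rw [hZ p hp q, sub_zero, smul_eq_mul] at this
      simp [M', hp, this]
    · simp [M', hp]
  rw [hrows, Matrix.det_mul_column, Finset.prod_ite_mem, Finset.univ_inter, Finset.prod_const,
    smul_eq_mul]

end AnalyticOrder

theorem vanishesToOrder_iff_natCast_le_analyticOrderAt {g : ℂ → ℂ} {α : ℂ} {d : ℕ}
    (hg : AnalyticAt ℂ g α) : VanishesToOrder g α d ↔ (d : ℕ∞) ≤ analyticOrderAt g α :=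
  (natCast_le_analyticOrderAt_iff_iteratedDeriv_eq_zero hg).symm

theorem piCoef_eq_sum_det_submatrix {n : ℕ} (M : Matrix (Fin n) (Fin n) ℂ) (i : Fin n) :
    piCoef n M i = ∑ s ∈ univ.powersetCard ((i : ℕ) + 1),
      (M.submatrix (Subtype.val : s → Fin n) Subtype.val).det := by
  have h := M.charpoly_coeff_eq_sum_minors ((i : ℕ) + 1) (by simp)
  rw [Fintype.card_fin] at h
  rw [piCoef, h, ← mul_assoc, ← mul_pow, neg_one_mul, neg_neg, one_pow, one_mul]

theorem Monotone.sum_le_sum_of_card_le_of_isUpperSet {α M : Type*} [LinearOrder α]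
    [AddCommMonoid M] [PartialOrder M] [IsOrderedAddMonoid M] [CanonicallyOrderedAdd M]
    {f : α → M} (hf : Monotone f) {V T : Finset α} (hT : IsUpperSet (T : Set α))
    (hVT : #V ≤ #T) : ∑ x ∈ V, f x ≤ ∑ x ∈ T, f x := by
  classical
  rw [← sum_inter_add_sum_sdiff V T, ← sum_inter_add_sum_sdiff T V, inter_comm]
  refine add_le_add le_rfl ?_
  have hcard : #(V \ T) ≤ #(T \ V) := by
    have := card_sdiff_add_card_inter V T
    have := card_sdiff_add_card_inter T V
    rw [inter_comm] at this
    omega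
  rcases (T \ V).eq_empty_or_nonempty with hTV | hTV
  · rw [hTV, card_empty, Nat.le_zero, card_eq_zero] at hcard
    simp [hcard, hTV]
  set m := (T \ V).min' hTV
  have hm : m ∈ T \ V := min'_mem _ _
  calc ∑ x ∈ V \ T, f x ≤ #(V \ T) • f m := by
        refine sum_le_card_nsmul _ _ _ fun x hx => hf ?_
        by_contra! hmx
        exact (mem_sdiff.1 hx).2 (hT hmx.le (mem_sdiff.1 hm).1)
    _ ≤ #(T \ V) • f m := nsmul_le_nsmul_left zero_le hcard
    _ ≤ ∑ x ∈ T \ V, f x := card_nsmul_le_sum _ _ _ fun x hx => hf (min'_le _ _ hx)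

theorem Fin.card_filter_sub_le_val {m k : ℕ} (hk : k ≤ m) :
    #{i : Fin m | m - k ≤ (i : ℕ)} = k := by
  have := card_filter_add_card_filter_not (s := univ) fun i : Fin m => m - k ≤ (i : ℕ)
  simp only [not_le, Fin.card_filter_val_lt, card_univ, Fintype.card_fin] at this
  omega

namespace Composition

variable {n : ℕ} (c : Composition n)

theorem index_eq_iff {j : Fin n} {u : Fin c.length} :
    c.index j = u ↔ c.sizeUpTo u ≤ j ∧ (j : ℕ) < c.sizeUpTo (u + 1) := by
  rw [eq_comm, ← mem_range_embedding_iff', mem_range_embedding_iff]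

theorem index_eq_index_iff {p q : Fin n} (hpq : (q : ℕ) = p + 1) :
    c.index p = c.index q ↔ ¬ ∃ t, 0 < t ∧ t < c.length ∧ c.sizeUpTo t = q := by
  have hp := c.index_eq_iff.1 (rfl : c.index p = _)
  constructor
  · rintro hidx ⟨t, -, ht, htq⟩
    have hq : c.index q = ⟨t, ht⟩ :=
      c.index_eq_iff.2 ⟨htq.le, htq ▸ c.sizeUpTo_strict_mono ht⟩
    rw [← hidx] at hq
    rw [hq] at hp
    simp only at hp
    omega
  · intro hstart
    refine (c.index_eq_iff.2 ⟨by omega, lt_of_le_of_ne (by omega) fun hq => ?_⟩).symm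
    rcases (show (c.index p : ℕ) + 1 ≤ c.length from (c.index p).isLt).lt_or_eq with hlt | hlen
    · exact hstart ⟨_, Nat.succ_pos _, hlt, hq.symm⟩
    · have hn := c.sizeUpTo_length
      rw [← hlen] at hn
      have := q.isLt
      omega

theorem card_filter_index_eq_le (s : Finset (Fin n)) (u : Fin c.length) :
    #{j ∈ s | c.index j = u} ≤ c.blocksFun u := by
  calc #{j ∈ s | c.index j = u} ≤ #(univ.map (c.embedding u).toEmbedding) := by
        refine card_le_card fun j hj => ?_
        obtain ⟨k, hk⟩ := c.mem_range_embedding_iff'.2 (mem_filter.1 hj).2.symm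
        exact mem_map.2 ⟨k, mem_univ _, hk⟩
    _ = c.blocksFun u := by simp

theorem sizeUpTo_add_sum_blocksFun (t : ℕ) :
    c.sizeUpTo t + ∑ u ∈ univ.filter (fun u : Fin c.length => t ≤ (u : ℕ)), c.blocksFun u
      = n := by
  rw [sizeUpTo, ← c.ofFn_blocksFun, List.sum_take_ofFn]
  simp only [← not_lt]
  rw [sum_filter_add_sum_filter_not, sum_blocksFun]

theorem card_add_sizeUpTo_le (hc : Monotone c.blocksFun) (s : Finset (Fin n)) :
    #s + c.sizeUpTo (c.length - #(s.image c.index)) ≤ n := by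
  set k := #(s.image c.index)
  set T : Finset (Fin c.length) := {u | c.length - k ≤ (u : ℕ)}
  have hT : IsUpperSet (T : Set (Fin c.length)) := fun u v huv hu => by
    simp only [T, mem_coe, mem_filter, mem_univ, true_and] at hu ⊢
    exact le_trans hu huv
  have hk : k ≤ c.length := (card_le_univ _).trans (Fintype.card_fin _).le
  have hTcard : #T = k := Fin.card_filter_sub_le_val hk
  calc #s + c.sizeUpTo (c.length - k)
      = ∑ u ∈ s.image c.index, #{j ∈ s | c.index j = u} + c.sizeUpTo (c.length - k) := by
        rw [card_eq_sum_card_image c.index s]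
    _ ≤ ∑ u ∈ s.image c.index, c.blocksFun u + c.sizeUpTo (c.length - k) := by
        gcongr with u
        exact c.card_filter_index_eq_le s u
    _ ≤ ∑ u ∈ T, c.blocksFun u + c.sizeUpTo (c.length - k) := by
        gcongr 1
        exact hc.sum_le_sum_of_card_le_of_isUpperSet hT hTcard.ge
    _ = n := by rw [add_comm]; exact c.sizeUpTo_add_sum_blocksFun _

theorem card_image_index_suffix_le (hc : Monotone c.blocksFun) (s : Finset (Fin n)) :
    #(({j | n - #s ≤ (j : ℕ)} : Finset (Fin n)).image c.index) ≤ #(s.image c.index) := by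
  have hs := c.card_add_sizeUpTo_le hc s
  set k := #(s.image c.index)
  calc #(({j | n - #s ≤ (j : ℕ)} : Finset (Fin n)).image c.index)
      ≤ #(univ.filter fun u : Fin c.length => c.length - k ≤ (u : ℕ)) := by
        refine card_le_card fun u hu => ?_
        obtain ⟨j, hj, rfl⟩ := mem_image.1 hu
        simp only [mem_filter, mem_univ, true_and] at hj ⊢
        by_contra! hlt
        have h1 : (j : ℕ) < c.sizeUpTo ((c.index j : ℕ) + 1) := c.lt_sizeUpTo_index_succ j
        have h2 := c.monotone_sizeUpTo (show (c.index j : ℕ) + 1 ≤ c.length - k by omega)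
        omega
    _ = k := Fin.card_filter_sub_le_val ((card_le_univ _).trans (Fintype.card_fin _).le)

end Composition

theorem IsSingleJordan.exists_composition {n : ℕ} {A : Matrix (Fin n) (Fin n) ℂ}
    (hA : IsSingleJordan A 0) :
    ∃ c : Composition n, Monotone c.blocksFun ∧
      ∀ p q, A p q ≠ 0 ↔ (q : ℕ) = p + 1 ∧ c.index p = c.index q := by
  obtain ⟨hdiag, hoff, L, hpos, hsum, hsorted, hsup⟩ := hA
  let c : Composition n := ⟨L, hpos _, hsum⟩
  refine ⟨c, fun u v huv => hsorted.rel_get_of_le huv, fun p q => ?_⟩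
  by_cases hpq : (q : ℕ) = p + 1
  · rw [hsup p q hpq, c.index_eq_index_iff hpq]
    simp [hpq, c, Composition.sizeUpTo]
  · have : A p q = 0 :=
      if h : q = p then h ▸ hdiag p else hoff p q (fun e => h (Fin.ext e)) hpq
    simp [this, hpq]

section JordanBlocks

variable {n : ℕ} {A : Matrix (Fin n) (Fin n) ℂ} (c : Composition n)

theorem dIdx_le_card_image_index
    (hA : ∀ p q, A p q ≠ 0 ↔ (q : ℕ) = p + 1 ∧ c.index p = c.index q) {i : ℕ} (hi : 0 < i)
    (hin : i ≤ n) :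
    dIdx A i ≤ #(({j | n - i ≤ (j : ℕ)} : Finset (Fin n)).image c.index) := by
  set W : Finset (Fin n) := {j | n - i ≤ (j : ℕ)}
  have hbase : c.index ⟨n - i, by omega⟩ ∈ W.image c.index :=
    mem_image_of_mem _ (mem_filter.2 ⟨mem_univ _, le_rfl⟩)
  rw [dIdx, ← card_erase_add_one hbase, add_comm]
  gcongr 1
  -- `j` is the 1-indexed column of the superdiagonal entry `A (j-2) (j-1)`: when it vanishes,
  -- position `j - 1` is the start `sizeUpTo u` of a block `u` meeting the last `i` positions.
  refine card_le_card_of_surjOn (fun u : Fin c.length => c.sizeUpTo u + 1) fun j hj => ?_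
  obtain ⟨hjI, hj0⟩ := mem_filter.1 hj
  rw [mem_Icc] at hjI
  let p : Fin n := ⟨j - 2, by omega⟩
  let q : Fin n := ⟨j - 1, by omega⟩
  have hpq : (q : ℕ) = p + 1 := by simp [p, q]; omega
  obtain ⟨t, -, ht, htq⟩ : ∃ t, 0 < t ∧ t < c.length ∧ c.sizeUpTo t = q := by
    by_contra h
    exact (hA p q).2 ⟨hpq, (c.index_eq_index_iff hpq).2 h⟩ (hj0 _ _)
  have hq : c.index q = ⟨t, ht⟩ := c.index_eq_iff.2 ⟨htq.le, htq ▸ c.sizeUpTo_strict_mono ht⟩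
  refine ⟨⟨t, ht⟩, mem_erase.2 ⟨fun he => ?_, mem_image.2 ⟨q, ?_, hq⟩⟩, ?_⟩
  · have := (c.index_eq_iff.1 he.symm).1
    dsimp only [q] at this htq
    omega
  · simp only [W, mem_filter, mem_univ, true_and, q]
    omega
  · dsimp only [q] at htq
    simp only [htq]
    omega

theorem card_image_index_le_card_zero_rows
    (hA : ∀ p q, A p q ≠ 0 ↔ (q : ℕ) = p + 1 ∧ c.index p = c.index q) (s : Finset (Fin n)) :
    #(s.image c.index) ≤ #{p : s | ∀ q : s, A p q = 0} := by
  calc #(s.image c.index)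
      ≤ #(({p : s | ∀ q : s, A p q = 0} : Finset s).image (c.index ∘ Subtype.val)) := by
        refine card_le_card fun u hu => ?_
        obtain ⟨p, hp, rfl⟩ := mem_image.1 hu
        set F := s.filter (c.index · = c.index p)
        have hF : F.Nonempty := ⟨p, mem_filter.2 ⟨hp, rfl⟩⟩
        obtain ⟨hmS, hmidx⟩ := mem_filter.1 (F.max'_mem hF)
        refine mem_image.2 ⟨⟨F.max' hF, hmS⟩, mem_filter.2 ⟨mem_univ _, fun q => ?_⟩, hmidx⟩
        by_contra hne
        obtain ⟨hsucc, hidx⟩ := (hA _ _).1 hne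
        dsimp only at hsucc
        have := F.le_max' q (mem_filter.2 ⟨q.2, hidx.symm.trans hmidx⟩)
        rw [Fin.le_def] at this
        omega
    _ ≤ _ := card_image_le

end JordanBlocks

theorem IsSingleJordan.dIdx_card_le_card_zero_rows {n : ℕ} {A : Matrix (Fin n) (Fin n) ℂ}
    (hA : IsSingleJordan A 0) {s : Finset (Fin n)} (hs : s.Nonempty) :
    dIdx A #s ≤ #{p : s | ∀ q : s, A p q = 0} := by
  obtain ⟨c, hmono, hc⟩ := hA.exists_composition
  calc dIdx A #s ≤ #(({j | n - #s ≤ (j : ℕ)} : Finset (Fin n)).image c.index) :=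
        dIdx_le_card_image_index c hc hs.card_pos ((card_le_univ s).trans (Fintype.card_fin n).le)
    _ ≤ #(s.image c.index) := c.card_image_index_suffix_le hmono s
    _ ≤ _ := card_image_index_le_card_zero_rows c hc s

theorem statement3_general (n : ℕ) (A : Matrix (Fin n) (Fin n) ℂ) (hA : IsSingleJordan A 0)
    (Φ : ℂ → Matrix (Fin n) (Fin n) ℂ)
    (hΦ : ∀ i k, DifferentiableOn ℂ (fun ζ => Φ ζ i k) unitDisc)
    (hΦ0 : Φ 0 = A) :
    ∀ i : Fin n,
      VanishesToOrder (fun ζ => piCoef n (Φ ζ) i) 0 (dIdx A ((i : ℕ) + 1)) := by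
  intro i
  have hminor (s : Finset (Fin n)) (p q : s) :
      AnalyticAt ℂ (fun ζ => (Φ ζ).submatrix Subtype.val Subtype.val p q) 0 :=
    (hΦ p q).analyticAt (Metric.isOpen_ball.mem_nhds (Metric.mem_ball_self one_pos))
  simp only [piCoef_eq_sum_det_submatrix]
  rw [vanishesToOrder_iff_natCast_le_analyticOrderAt
    (Finset.analyticAt_fun_sum _ fun s _ => AnalyticAt.matrix_det (hminor s))]
  refine le_analyticOrderAt_finsetSum _ fun s hs => ?_
  have hcard : #s = (i : ℕ) + 1 := (mem_powersetCard.1 hs).2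
  calc ((dIdx A ((i : ℕ) + 1) : ℕ) : ℕ∞) ≤ (#{p : s | ∀ q : s, A p q = 0} : ℕ) := by
        rw [← hcard]
        exact_mod_cast hA.dIdx_card_le_card_zero_rows (card_pos.1 (by omega))
    _ ≤ _ := natCast_card_le_analyticOrderAt_det (hminor s) _ fun p hp q => by
        simpa [hΦ0] using (mem_filter.1 hp).2 q

/-- if `Φ : D → Ω_n` is holomorphic with `Φ(0) = A` a single-eigenvalue
Jordan matrix with eigenvalue `0`, then `(π∘Φ)_i(ζ) = O(ζ^{d_i(A)})`. -/
theorem statement3 (n : ℕ) (A : Matrix (Fin n) (Fin n) ℂ) (hA : IsSingleJordan A 0)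
    (Φ : ℂ → Matrix (Fin n) (Fin n) ℂ)
    (hΦ : ∀ i k, DifferentiableOn ℂ (fun ζ => Φ ζ i k) unitDisc)
    (hΦΩ : Set.MapsTo Φ unitDisc (SpectralBall n)) (hΦ0 : Φ 0 = A) :
    ∀ i : Fin n,
      VanishesToOrder (fun ζ => piCoef n (Φ ζ) i) 0 (dIdx A ((i : ℕ) + 1)) :=
  statement3_general n A hA Φ hΦ hΦ0
end

section
/- Let A = diag(B_1,…,B_s) ∈ M_n(ℂ) be a block Jordan matrix with block sizes m_1,…,m_s, and set n_i := m_1 + ⋯ + m_i for 1 ≤ i ≤ s. Let A′ ∈ M_n(ℂ) be the matrix with A′_{n_i, n_i+1} = 1 for 1 ≤ i ≤ s−1 and A′_{ij} = A_{ij} for all other pairs of indices (i,j). Then A′ is similar to A, i.e. there exists an invertible matrix P ∈ M_n(ℂ) with A′ = P^{−1} A P. -/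
open Polynomial

/-!
Write `A' = A + E`. The perturbation `E` lives strictly above the diagonal blocks `B_j`, both
`A` and `A'` are upper triangular, and diagonal entries in different blocks are different
eigenvalues. Comparing entries in the right order shows that the Sylvester operator
`X ↦ A X - X A'` is injective, hence bijective, on the space of matrices supported strictly
above the diagonal blocks. So `A X - X A' = E` has such a solution `X`, and `P = 1 + X`, which
is unipotent, satisfies `P A' = A P`.
-/

namespace Matrix

variable {ι α : Type*} [LinearOrder α]

def strictBlockTriangular (R : Type*) [Semiring R] (b : ι → α) : Submodule R (Matrix ι ι R) where
  carrier := {X | ∀ i j, b j ≤ b i → X i j = 0}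
  add_mem' hX hY i j h := by rw [add_apply, hX i j h, hY i j h, add_zero]
  zero_mem' _ _ _ := rfl
  smul_mem' c X hX i j h := by rw [smul_apply, hX i j h, smul_zero]

section Semiring

variable {R : Type*} [Semiring R] [Fintype ι] {b : ι → α} {M X : Matrix ι ι R}

theorem BlockTriangular.mul_mem_strictBlockTriangular_left (hM : M.BlockTriangular b)
    (hX : X ∈ strictBlockTriangular R b) : M * X ∈ strictBlockTriangular R b := by
  intro i j hji
  rw [mul_apply]
  refine Finset.sum_eq_zero fun t _ => ?_
  rcases lt_or_ge (b t) (b i) with hti | hit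
  · rw [hM hti, zero_mul]
  · rw [hX t j (hji.trans hit), mul_zero]

theorem BlockTriangular.mul_mem_strictBlockTriangular_right (hM : M.BlockTriangular b)
    (hX : X ∈ strictBlockTriangular R b) : X * M ∈ strictBlockTriangular R b := by
  intro i j hji
  rw [mul_apply]
  refine Finset.sum_eq_zero fun t _ => ?_
  rcases lt_or_ge (b j) (b t) with hjt | htj
  · rw [hM hjt, mul_zero]
  · rw [hX i t (htj.trans hji), zero_mul]

end Semiring

theorem det_one_add_of_mem_strictBlockTriangular {R : Type*} [CommRing R] [Fintype ι]
    [DecidableEq ι] {b : ι → α} {X : Matrix ι ι R} (hX : X ∈ strictBlockTriangular R b) :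
    (1 + X).det = 1 := by
  have hblock : (1 + X).BlockTriangular b :=
    blockTriangular_one.add fun i j hji => hX i j hji.le
  rw [hblock.det]
  refine Finset.prod_eq_one fun a _ => ?_
  rw [show (1 + X).toSquareBlock b a = 1 from ?_, det_one]
  ext i j
  rw [toSquareBlock_def, of_apply, add_apply, hX i j (by rw [i.2, j.2]), add_zero]
  simp [one_apply, Subtype.ext_iff]

variable {K : Type*} [Field K] [Fintype ι] [LinearOrder ι] {b : ι → α} {A A' X : Matrix ι ι K}


/-- Induction over the columns from the left and, within a column, over the rows from the
bottom: the `(i, k)` entry of `A X = X A'` then reduces to `(A i i - A' k k) X i k = 0`. -/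
theorem eq_zero_of_mul_eq_mul_of_mem_strictBlockTriangular (hA : A.IsUpperTriangular)
    (hA' : A'.IsUpperTriangular) (hdiag : ∀ i k, b i < b k → A i i ≠ A' k k)
    (hX : X ∈ strictBlockTriangular K b) (hcomm : A * X = X * A') : X = 0 := by
  ext i k
  induction k using WellFoundedLT.induction generalizing i with | ind k ihk =>
  induction i using WellFoundedGT.induction with | ind i ihi =>
  have hAX : (A * X) i k = A i i * X i k := by
    rw [mul_apply]
    refine Finset.sum_eq_single i (fun t _ hti => ?_) (by simp)
    rcases lt_or_gt_of_ne hti with hti | hit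
    · rw [hA hti, zero_mul]
    · rw [ihi t hit, zero_apply, mul_zero]
  have hXA' : (X * A') i k = X i k * A' k k := by
    rw [mul_apply]
    refine Finset.sum_eq_single k (fun t _ htk => ?_) (by simp)
    rcases lt_or_gt_of_ne htk with htk | hkt
    · rw [ihk t htk i, zero_apply, zero_mul]
    · rw [hA' hkt, mul_zero]
  rcases le_or_gt (b k) (b i) with hki | hik
  · exact hX i k hki
  · have hsub : (A i i - A' k k) * X i k = 0 := by
      rw [sub_mul, ← hAX, mul_comm, ← hXA', hcomm, sub_self]
    exact (mul_eq_zero.mp hsub).resolve_left (sub_ne_zero.mpr (hdiag i k hik))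

theorem exists_conj_eq_of_sub_mem_strictBlockTriangular [DecidableEq ι] (hb : Monotone b)
    (hA : A.IsUpperTriangular) (hA' : A'.IsUpperTriangular)
    (hE : A' - A ∈ strictBlockTriangular K b) (hdiag : ∀ i k, b i < b k → A i i ≠ A k k) :
    ∃ P : Matrix ι ι K, IsUnit P.det ∧ A' = P⁻¹ * A * P := by
  have hblock : ∀ {M : Matrix ι ι K}, M.IsUpperTriangular → M.BlockTriangular b :=
    fun hM _ _ hji => hM (hb.reflect_lt hji)
  have hdiag' : ∀ i k, b i < b k → A i i ≠ A' k k := fun i k hik => by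
    rw [sub_eq_zero.mp (hE k k le_rfl)]
    exact hdiag i k hik
  let sylvester := (LinearMap.mulLeft K A - LinearMap.mulRight K A').restrict
    (p := strictBlockTriangular K b) (q := strictBlockTriangular K b) fun X hX =>
      sub_mem ((hblock hA).mul_mem_strictBlockTriangular_left hX)
        ((hblock hA').mul_mem_strictBlockTriangular_right hX)
  have hinj : Function.Injective sylvester := by
    refine (injective_iff_map_eq_zero _).mpr fun X hX => Subtype.ext ?_
    exact eq_zero_of_mul_eq_mul_of_mem_strictBlockTriangular hA hA' hdiag' X.2
      (sub_eq_zero.mp (congrArg Subtype.val hX))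
  obtain ⟨X, hX⟩ := LinearMap.injective_iff_surjective.mp hinj ⟨A' - A, hE⟩
  have hsylv : A * X - X * A' = A' - A := congrArg Subtype.val hX
  have hdet : IsUnit (1 + X.1).det := by
    rw [det_one_add_of_mem_strictBlockTriangular X.2]
    exact isUnit_one
  have hintertwine : (1 + X.1) * A' = A * (1 + X.1) := by
    rw [add_mul, one_mul, mul_add, mul_one, ← sub_eq_zero,
      show A' + X * A' - (A + A * X) = -(A * X - X * A' - (A' - A)) by abel, hsylv, sub_self,
      neg_zero]
  refine ⟨1 + X, hdet, ?_⟩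
  rw [mul_assoc, ← hintertwine]
  exact (nonsing_inv_mul_cancel_left _ _ hdet).symm

end Matrix

section BlockJordan

variable {s : ℕ} {m : Fin s → ℕ}

theorem nsum_zero : nsum m 0 = 0 := by simp [nsum]

theorem nsum_mono : Monotone (nsum m) := fun a b hab =>
  Finset.sum_le_sum_of_subset fun j => by
    simp only [Finset.mem_filter, Finset.mem_univ, true_and]
    omega

theorem nsum_of_le {t : ℕ} (ht : s ≤ t) : nsum m t = ∑ j, m j := by
  rw [nsum, Finset.filter_true_of_mem fun j _ => j.2.trans_le ht]

theorem nsum_succ {t : ℕ} (ht : t < s) : nsum m (t + 1) = nsum m t + m ⟨t, ht⟩ := by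
  have hfilter : Finset.univ.filter (fun j : Fin s => (j : ℕ) < t + 1)
      = insert ⟨t, ht⟩ (Finset.univ.filter fun j : Fin s => (j : ℕ) < t) := by
    ext j
    simp only [Finset.mem_insert, Finset.mem_filter, Finset.mem_univ, true_and, Fin.ext_iff]
    omega
  rw [nsum, hfilter, Finset.sum_insert (by simp), add_comm]
  rfl

/-- Row `x` (counted from `0`) lies in the block `B (blockIndex m x)`. -/
def blockIndex (m : Fin s → ℕ) (x : ℕ) : ℕ :=
  Nat.findGreatest (fun t => nsum m t ≤ x) s

theorem nsum_blockIndex_le (x : ℕ) : nsum m (blockIndex m x) ≤ x :=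
  Nat.findGreatest_spec (P := fun t => nsum m t ≤ x) (Nat.zero_le s) (by simp [nsum_zero])

theorem blockIndex_lt_of_lt_nsum {x t : ℕ} (h : x < nsum m t) : blockIndex m x < t :=
  lt_of_not_ge fun ht => h.not_ge ((nsum_mono ht).trans (nsum_blockIndex_le x))

theorem le_blockIndex {x t : ℕ} (ht : t ≤ s) (h : nsum m t ≤ x) : t ≤ blockIndex m x :=
  Nat.le_findGreatest ht h

theorem blockIndex_mono : Monotone (blockIndex m) := fun x _ hxy =>
  le_blockIndex (Nat.findGreatest_le s) ((nsum_blockIndex_le x).trans hxy)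

theorem blockIndex_lt {x : ℕ} (hx : x < ∑ j, m j) : blockIndex m x < s :=
  blockIndex_lt_of_lt_nsum (by rwa [nsum_of_le le_rfl])

theorem lt_nsum_blockIndex_succ {x : ℕ} (hx : x < ∑ j, m j) :
    x < nsum m (blockIndex m x + 1) := by
  by_cases hs : blockIndex m x + 1 ≤ s
  · exact lt_of_not_ge fun h => Nat.findGreatest_is_greatest (Nat.lt_succ_self _) hs h
  · rwa [nsum_of_le (by omega)]

variable {n : ℕ} {lam : Fin s → ℂ} {B : ∀ j : Fin s, Matrix (Fin (m j)) (Fin (m j)) ℂ}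
  {A : Matrix (Fin n) (Fin n) ℂ}

theorem IsBlockJordan.exists_apply_eq (hA : IsBlockJordan m lam B A) {i k : Fin n}
    (h : blockIndex m i = blockIndex m k) :
    ∃ (j : Fin s) (a c : Fin (m j)), (j : ℕ) = blockIndex m i ∧
      nsum m j + a = i ∧ nsum m j + c = k ∧ A i k = B j a c := by
  obtain ⟨hsum, -, -, -, hblock, -⟩ := hA
  have hi : (i : ℕ) < ∑ j, m j := hsum ▸ i.2
  have hk : (k : ℕ) < ∑ j, m j := hsum ▸ k.2
  have ht := blockIndex_lt hi
  have hsize := nsum_succ (m := m) ht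
  have hi_ge := nsum_blockIndex_le (m := m) i
  have hi_lt := lt_nsum_blockIndex_succ hi
  have hk_ge := h ▸ nsum_blockIndex_le (m := m) k
  have hk_lt := h ▸ lt_nsum_blockIndex_succ hk
  refine ⟨⟨_, ht⟩, ⟨i - nsum m (blockIndex m i), by omega⟩,
    ⟨k - nsum m (blockIndex m i), by omega⟩, rfl, by simp only; omega, by simp only; omega, ?_⟩
  rw [← hblock _ _ _ (by simp only; omega) (by simp only; omega)]
  congr 1 <;> ext <;> simp only <;> omega

theorem IsBlockJordan.apply_eq_zero_of_blockIndex_ne (hA : IsBlockJordan m lam B A)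
    {i k : Fin n} (h : blockIndex m i ≠ blockIndex m k) : A i k = 0 := by
  obtain ⟨hsum, -, -, -, -, hcross⟩ := hA
  exact hcross i k ⟨_, blockIndex_lt (hsum ▸ i.2)⟩ ⟨_, blockIndex_lt (hsum ▸ k.2)⟩
    (fun hik => h (congrArg Fin.val hik)) (nsum_blockIndex_le _)
    (lt_nsum_blockIndex_succ (hsum ▸ i.2)) (nsum_blockIndex_le _)
    (lt_nsum_blockIndex_succ (hsum ▸ k.2))

theorem IsBlockJordan.isUpperTriangular (hA : IsBlockJordan m lam B A) : A.IsUpperTriangular := by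
  intro i k hki
  have hki : (k : ℕ) < i := hki
  by_cases h : blockIndex m i = blockIndex m k
  · obtain ⟨j, a, c, -, hi, hk, hAik⟩ := hA.exists_apply_eq h
    obtain ⟨-, hoffdiag, -⟩ := hA.2.2.2.1 j
    rw [hAik]
    exact hoffdiag a c (by omega) (by omega)
  · exact hA.apply_eq_zero_of_blockIndex_ne h

theorem IsBlockJordan.exists_apply_self_eq (hA : IsBlockJordan m lam B A) (i : Fin n) :
    ∃ j : Fin s, (j : ℕ) = blockIndex m i ∧ A i i = lam j := by
  obtain ⟨j, a, c, hj, ha, hc, hAii⟩ := hA.exists_apply_eq (rfl : blockIndex m i = _)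
  obtain rfl : c = a := Fin.ext (by omega)
  obtain ⟨hdiag, -⟩ := hA.2.2.2.1 j
  exact ⟨j, hj, hAii.trans (hdiag c)⟩

theorem IsBlockJordan.apply_self_ne (hA : IsBlockJordan m lam B A) {i k : Fin n}
    (h : blockIndex m i < blockIndex m k) : A i i ≠ A k k := by
  obtain ⟨j, hj, hAi⟩ := hA.exists_apply_self_eq i
  obtain ⟨j', hj', hAk⟩ := hA.exists_apply_self_eq k
  rw [hAi, hAk]
  intro hlam
  obtain rfl := hA.2.1 hlam
  omega

open scoped Classical in
noncomputable def modifiedJordan {R : Type*} [One R] (m : Fin s → ℕ)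
    (A : Matrix (Fin n) (Fin n) R) : Matrix (Fin n) (Fin n) R :=
  Matrix.of fun i j =>
    if (∃ t, 1 ≤ t ∧ t ≤ s - 1 ∧ (i : ℕ) + 1 = nsum m t ∧ (j : ℕ) = nsum m t) then 1 else A i j

theorem modifiedJordan_isUpperTriangular {R : Type*} [Zero R] [One R]
    {A : Matrix (Fin n) (Fin n) R}
    (hA : A.IsUpperTriangular) : (modifiedJordan m A).IsUpperTriangular := by
  intro i k hki
  have hki' : (k : ℕ) < i := hki
  rw [modifiedJordan, Matrix.of_apply, if_neg, hA hki]
  rintro ⟨t, -, -, hi, hk⟩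
  omega

theorem modifiedJordan_sub_mem_strictBlockTriangular {R : Type*} [Ring R]
    (A : Matrix (Fin n) (Fin n) R) :
    modifiedJordan m A - A ∈ Matrix.strictBlockTriangular R fun i : Fin n => blockIndex m i := by
  intro i k hki
  rw [Matrix.sub_apply, modifiedJordan, Matrix.of_apply, if_neg, sub_self]
  rintro ⟨t, -, hts, hi, hk⟩
  have h1 : blockIndex m i < t := blockIndex_lt_of_lt_nsum (by omega)
  have h2 : t ≤ blockIndex m k := le_blockIndex (by omega) hk.ge
  exact hki.not_gt (h1.trans_le h2)

end BlockJordan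

open scoped Classical in
/-- the modified Jordan form `A'` of a block Jordan matrix `A` (obtained
by putting `1` at the positions `(n_i, n_i+1)`, `1 ≤ i ≤ s-1`) is similar to `A`. -/
theorem statement6 (n s : ℕ) (m : Fin s → ℕ) (lam : Fin s → ℂ)
    (B : ∀ j : Fin s, Matrix (Fin (m j)) (Fin (m j)) ℂ)
    (A A' : Matrix (Fin n) (Fin n) ℂ) (hBJ : IsBlockJordan m lam B A)
    (hA' : ∀ i j : Fin n,
      A' i j =
        if (∃ t, 1 ≤ t ∧ t ≤ s - 1 ∧ (i : ℕ) + 1 = nsum m t ∧ (j : ℕ) = nsum m t)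
        then 1 else A i j) :
    ∃ P : Matrix (Fin n) (Fin n) ℂ, IsUnit P.det ∧ A' = P⁻¹ * A * P := by
  obtain rfl : A' = modifiedJordan m A := Matrix.ext hA'
  exact Matrix.exists_conj_eq_of_sub_mem_strictBlockTriangular
    (fun _ _ h => blockIndex_mono h) hBJ.isUpperTriangular
    (modifiedJordan_isUpperTriangular hBJ.isUpperTriangular)
    (modifiedJordan_sub_mem_strictBlockTriangular A) fun _ _ h => hBJ.apply_self_ne h
end

section
/- Let A = diag(B_1,…,B_s) be a block Jordan matrix in Ω_n with s ≥ 2, whose first block B_1 has size m_1 and eigenvalue λ_1 and whose second block B_2 has size m_2 and eigenvalue λ_2 ≠ λ_1. Let φ : D → G_n be holomorphic and satisfy the conditions (★) at 0 relative to A. Let φ_{1,1},…,φ_{m_1,m_1} : D → ℂ be holomorphic with φ_{i,i}(0) = λ_1 for 1 ≤ i ≤ m_1, and suppose that for some integer d ≥ d_{m_2}(B_2) one has Δ^k P_{[φ(ζ)]}(φ_{1,1}(ζ),…,φ_{k+1,k+1}(ζ)) = O(ζ^d) for all 0 ≤ k ≤ m_1 − 1. Let φ_{m_1+1,m_1+1}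 : D → ℂ be any holomorphic function with φ_{m_1+1,m_1+1}(0) = λ_2. Then Δ^{m_1} P_{[φ(ζ)]}(φ_{1,1}(ζ),…,φ_{m_1,m_1}(ζ), φ_{m_1+1,m_1+1}(ζ)) = O(ζ^{d_{m_2}(B_2)}) at 0. -/
open Polynomial

/-!
Write `P_ζ = P_{[φ(ζ)]}`, `x_i = φ_{i+1,i+1}` and `y = x_{m_1} = φ_{m_1+1,m_1+1}`. Newton's
interpolation formula gives
  `P_ζ(y) = ∑_{k < m_1} ∏_{i < k} (y - x_i) Δ^k P_ζ(x_0, …, x_k)`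
  `         + ∏_{i < m_1} (y - x_i) Δ^{m_1} P_ζ(x_0, …, x_{m_1})`.
Expanding `P_ζ` around `λ_2`, the term `(P_ζ^{(i)}(λ_2) / i!) (y - λ_2)^i` vanishes to order
`d_{m_2 - i}(B_2) + i ≥ d_{m_2}(B_2)` by (★), so `P_ζ(y)` vanishes to order `d_{m_2}(B_2)`; the
lower divided differences vanish to order `d ≥ d_{m_2}(B_2)` by hypothesis. Since
`∏_{i < m_1} (y - x_i)` takes the value `(λ_2 - λ_1)^{m_1} ≠ 0` at `0`, the same order passes to
`Δ^{m_1} P_ζ`. Orders of vanishing are computed with `analyticOrderAt`.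
-/

open Finset Topology

lemma homogSum_zero {k : ℕ} (x : Fin k → ℂ) : homogSum k 0 x = 1 := by
  simp [homogSum, Finset.Nat.antidiagonalTuple_zero_right]

lemma homogSum_one (d : ℕ) (x : Fin 1 → ℂ) : homogSum 1 d x = x 0 ^ d := by
  simp [homogSum, Finset.Nat.antidiagonalTuple_one]

lemma homogSum_snoc {k : ℕ} (d : ℕ) (x : Fin k → ℂ) (y : ℂ) :
    homogSum (k + 1) d (Fin.snoc x y) =
      ∑ p ∈ antidiagonal d, homogSum k p.1 x * y ^ p.2 := by
  simp only [homogSum, sum_mul]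
  rw [sum_sigma']
  refine (sum_nbij' (fun q => Fin.snoc q.2 q.1.2)
    (fun c => (⟨(d - c (Fin.last k), c (Fin.last k)), Fin.init c⟩ : Σ _ : ℕ × ℕ, Fin k → ℕ))
    ?_ ?_ ?_ ?_ ?_).symm
  · rintro ⟨⟨a, b⟩, c⟩ h
    simp only [mem_sigma, HasAntidiagonal.mem_antidiagonal,
      Finset.Nat.mem_antidiagonalTuple] at h
    simp [Finset.Nat.mem_antidiagonalTuple, Fin.sum_univ_castSucc, h.2, h.1]
  · intro c hc
    simp only [Finset.Nat.mem_antidiagonalTuple, Fin.sum_univ_castSucc] at hc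
    simp only [mem_sigma, HasAntidiagonal.mem_antidiagonal,
      Finset.Nat.mem_antidiagonalTuple, Fin.init]
    omega
  · rintro ⟨⟨a, b⟩, c⟩ h
    simp only [mem_sigma, HasAntidiagonal.mem_antidiagonal] at h
    simp [← h.1]
  · intro c _
    simp
  · rintro ⟨⟨a, b⟩, c⟩ _
    simp [Fin.prod_univ_castSucc]

lemma homogSum_snoc_succ {k : ℕ} (d : ℕ) (x : Fin k → ℂ) (y : ℂ) :
    homogSum (k + 1) (d + 1) (Fin.snoc x y) =
      homogSum k (d + 1) x + y * homogSum (k + 1) d (Fin.snoc x y) := by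
  rw [homogSum_snoc, homogSum_snoc, Finset.Nat.sum_antidiagonal_succ', mul_sum]
  simp only [pow_zero, mul_one, pow_succ]
  congr 1
  exact sum_congr rfl fun p _ => by ring

lemma homogSum_snoc_sub_snoc {k : ℕ} (d : ℕ) (x : Fin k → ℂ) (y z : ℂ) :
    homogSum (k + 1) (d + 1) (Fin.snoc x y) - homogSum (k + 1) (d + 1) (Fin.snoc x z) =
      (y - z) * homogSum (k + 2) d (Fin.snoc (Fin.snoc x z) y) := by
  induction d with
  | zero => simp only [homogSum_snoc_succ, homogSum_zero]; ring
  | succ d ih =>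
    rw [homogSum_snoc_succ _ x y, homogSum_snoc_succ _ x z, homogSum_snoc_succ _ (Fin.snoc x z) y]
    linear_combination y * ih

lemma divDiff_zero (P : ℂ[X]) (x : Fin 1 → ℂ) : divDiff P 0 x = P.eval (x 0) := by
  simp [divDiff, eval_eq_sum_range, Nat.range_succ_eq_Icc_zero, homogSum_one]

lemma divDiff_snoc_sub_snoc (P : ℂ[X]) {k : ℕ} (x : Fin k → ℂ) (y z : ℂ) :
    divDiff P k (Fin.snoc x y) - divDiff P k (Fin.snoc x z) =
      (y - z) * divDiff P (k + 1) (Fin.snoc (Fin.snoc x z) y) := by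
  simp only [divDiff, ← sum_sub_distrib, ← mul_sub, mul_sum]
  rcases lt_or_ge P.natDegree k with hk | hk
  · simp [Icc_eq_empty_of_lt hk, Icc_eq_empty_of_lt (hk.trans k.lt_succ_self)]
  rw [← add_sum_Ioc_eq_sum_Icc hk, ← Icc_add_one_left_eq_Ioc, Nat.sub_self, homogSum_zero,
    homogSum_zero, sub_self, mul_zero, zero_add]
  refine sum_congr rfl fun j hj => ?_
  obtain ⟨i, rfl⟩ := Nat.exists_eq_add_of_le (mem_Icc.1 hj).1
  rw [show k + 1 + i - k = i + 1 by omega, Nat.add_sub_cancel_left, homogSum_snoc_sub_snoc]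
  ring

lemma snoc_restrict_eq {α : Type*} (x : ℕ → α) (M : ℕ) :
    (Fin.snoc (fun t : Fin M => x t) (x M) : Fin (M + 1) → α) = fun t : Fin (M + 1) => x t := by
  funext t
  induction t using Fin.lastCases <;> simp

lemma eval_eq_newton_snoc (P : ℂ[X]) (x : ℕ → ℂ) (y : ℂ) (M : ℕ) :
    P.eval y = ∑ k ∈ range M, (∏ i ∈ range k, (y - x i)) * divDiff P k (fun t => x t) +
      (∏ i ∈ range M, (y - x i)) * divDiff P M (Fin.snoc (fun t : Fin M => x t) y) := by
  induction M with
  | zero => simp [divDiff_zero, Fin.snoc]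
  | succ M ih =>
    have step := divDiff_snoc_sub_snoc P (fun t : Fin M => x t) y (x M)
    rw [snoc_restrict_eq] at step
    rw [ih, sum_range_succ, prod_range_succ]
    linear_combination (∏ i ∈ range M, (y - x i)) * step

lemma eval_eq_newton (P : ℂ[X]) (x : ℕ → ℂ) (M : ℕ) :
    P.eval (x M) = ∑ k ∈ range M, (∏ i ∈ range k, (x M - x i)) * divDiff P k (fun t => x t) +
      (∏ i ∈ range M, (x M - x i)) * divDiff P M (fun t => x t) := by
  rw [eval_eq_newton_snoc P x (x M) M, snoc_restrict_eq]

lemma le_analyticOrderAt_sum {ι : Type*} {s : Finset ι} {f : ι → ℂ → ℂ} {z₀ : ℂ} {D : ℕ∞}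
    (h : ∀ i ∈ s, D ≤ analyticOrderAt (f i) z₀) :
    D ≤ analyticOrderAt (fun z => ∑ i ∈ s, f i z) z₀ := by
  classical
  induction s using Finset.induction with
  | empty => simp [analyticOrderAt_eq_top.2 (Filter.Eventually.of_forall fun _ => rfl)]
  | insert a s ha ih =>
    simp only [sum_insert ha]
    exact (le_min (h a (mem_insert_self a s)) (ih fun i hi => h i (mem_insert_of_mem hi))).trans
      le_analyticOrderAt_add

lemma analyticOrderAt_mul_of_ne_zero {u g : ℂ → ℂ} {z₀ : ℂ} (hu : AnalyticAt ℂ u z₀)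
    (hu₀ : u z₀ ≠ 0) (hg : AnalyticAt ℂ g z₀) :
    analyticOrderAt (u * g) z₀ = analyticOrderAt g z₀ := by
  rw [analyticOrderAt_mul hu hg, analyticOrderAt_eq_zero.2 (.inr hu₀), zero_add]

lemma vanishesToOrder_iff {f : ℂ → ℂ} {z₀ : ℂ} (hf : AnalyticAt ℂ f z₀) {d : ℕ} :
    VanishesToOrder f z₀ d ↔ d ≤ analyticOrderAt f z₀ :=
  (natCast_le_analyticOrderAt_iff_iteratedDeriv_eq_zero hf).symm

lemma polyDeriv_eq_iterate (k : ℕ) (P : ℂ[X]) : polyDeriv k P = derivative^[k] P := rfl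

lemma eval_eq_sum_polyDeriv {P : ℂ[X]} {N : ℕ} (hN : P.natDegree ≤ N) (a y : ℂ) :
    P.eval y = ∑ i ∈ range (N + 1), (i.factorial : ℂ)⁻¹ * (polyDeriv i P).eval a * (y - a) ^ i := by
  rw [← sub_add_cancel y a, ← taylor_eval,
    eval_eq_sum_range' (n := N + 1) (by rw [natDegree_taylor]; omega), add_sub_cancel_right]
  refine sum_congr rfl fun i _ => ?_
  rw [taylor_coeff, polyDeriv_eq_iterate, ← factorial_smul_hasseDeriv]
  simp [Nat.factorial_ne_zero]

section PolynomialFamily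

variable {P : ℂ → ℂ[X]} {N : ℕ} {z₀ : ℂ}

lemma analyticAt_eval_of_coeff (hP : ∀ j, AnalyticAt ℂ (fun ζ => (P ζ).coeff j) z₀)
    (hN : ∀ ζ, (P ζ).natDegree ≤ N) {x : ℂ → ℂ} (hx : AnalyticAt ℂ x z₀) :
    AnalyticAt ℂ (fun ζ => (P ζ).eval (x ζ)) z₀ := by
  have : (fun ζ => (P ζ).eval (x ζ)) = fun ζ => ∑ j ∈ range (N + 1), (P ζ).coeff j * x ζ ^ j :=
    funext fun ζ => eval_eq_sum_range' (Nat.lt_succ_of_le (hN ζ)) _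
  rw [this]
  fun_prop

lemma analyticAt_eval_polyDeriv (hP : ∀ j, AnalyticAt ℂ (fun ζ => (P ζ).coeff j) z₀)
    (hN : ∀ ζ, (P ζ).natDegree ≤ N) (i : ℕ) (a : ℂ) :
    AnalyticAt ℂ (fun ζ => (polyDeriv i (P ζ)).eval a) z₀ := by
  refine analyticAt_eval_of_coeff (N := N) (fun j => ?_) (fun ζ => ?_) analyticAt_const
  · simp only [polyDeriv_eq_iterate, coeff_iterate_derivative, nsmul_eq_mul]
    fun_prop
  · exact (natDegree_iterate_derivative _ _).trans ((Nat.sub_le _ _).trans (hN ζ))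

lemma analyticAt_divDiff (hP : ∀ j, AnalyticAt ℂ (fun ζ => (P ζ).coeff j) z₀)
    (hN : ∀ ζ, (P ζ).natDegree ≤ N) {k : ℕ} {x : Fin (k + 1) → ℂ → ℂ}
    (hx : ∀ t, AnalyticAt ℂ (x t) z₀) :
    AnalyticAt ℂ (fun ζ => divDiff (P ζ) k (fun t => x t ζ)) z₀ := by
  have : (fun ζ => divDiff (P ζ) k (fun t => x t ζ)) = fun ζ =>
      ∑ j ∈ Icc k N, (P ζ).coeff j * homogSum (k + 1) (j - k) (fun t => x t ζ) := by
    funext ζ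
    refine sum_subset (Icc_subset_Icc_right (hN ζ)) fun j hj hj' => ?_
    rw [coeff_eq_zero_of_natDegree_lt (by simp_all), zero_mul]
  rw [this]
  simp only [homogSum]
  fun_prop

theorem le_analyticOrderAt_eval (hP : ∀ j, AnalyticAt ℂ (fun ζ => (P ζ).coeff j) z₀)
    (hN : ∀ ζ, (P ζ).natDegree ≤ N) {y : ℂ → ℂ} {a : ℂ} (hy : AnalyticAt ℂ y z₀)
    (hya : y z₀ = a) {D : ℕ∞}
    (hD : ∀ i, D ≤ analyticOrderAt (fun ζ => (polyDeriv i (P ζ)).eval a) z₀ + i) :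
    D ≤ analyticOrderAt (fun ζ => (P ζ).eval (y ζ)) z₀ := by
  simp_rw [fun ζ => eval_eq_sum_polyDeriv (hN ζ) a (y ζ)]
  refine le_analyticOrderAt_sum fun i _ => ?_
  have hderiv := analyticAt_eval_polyDeriv hP hN i a
  have hya' : 1 ≤ analyticOrderAt (fun ζ => y ζ - a) z₀ :=
    Order.one_le_iff_ne_zero.2 (analyticOrderAt_ne_zero.2 ⟨by fun_prop, by simp [hya]⟩)
  calc D ≤ analyticOrderAt (fun ζ => (polyDeriv i (P ζ)).eval a) z₀ + i := hD i
    _ ≤ analyticOrderAt (fun _ => (i.factorial : ℂ)⁻¹) z₀ +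
          analyticOrderAt (fun ζ => (polyDeriv i (P ζ)).eval a) z₀ +
          i • analyticOrderAt (fun ζ => y ζ - a) z₀ := by
      gcongr
      · exact le_add_self
      · simpa using nsmul_le_nsmul_right hya' i
    _ = _ := by
      rw [← analyticOrderAt_pow (by fun_prop), ← analyticOrderAt_mul analyticAt_const hderiv,
        ← analyticOrderAt_mul (by fun_prop) (by fun_prop)]
      rfl

/-- Newton's formula at the last node, divided by the unit `∏ i < M, (x M - x i)`. -/
theorem le_analyticOrderAt_divDiff (hP : ∀ j, AnalyticAt ℂ (fun ζ => (P ζ).coeff j) z₀)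
    (hN : ∀ ζ, (P ζ).natDegree ≤ N) {M : ℕ} {x : ℕ → ℂ → ℂ}
    (hx : ∀ i ≤ M, AnalyticAt ℂ (x i) z₀) (hsep : ∀ i < M, x i z₀ ≠ x M z₀) {D : ℕ∞}
    (heval : D ≤ analyticOrderAt (fun ζ => (P ζ).eval (x M ζ)) z₀)
    (hlow : ∀ k < M, D ≤ analyticOrderAt (fun ζ => divDiff (P ζ) k (fun t => x t ζ)) z₀) :
    D ≤ analyticOrderAt (fun ζ => divDiff (P ζ) M (fun t => x t ζ)) z₀ := by
  set π : ℕ → ℂ → ℂ := fun k ζ => ∏ i ∈ range k, (x M ζ - x i ζ)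
  set F : ℕ → ℂ → ℂ := fun k ζ => divDiff (P ζ) k (fun t => x t ζ)
  have hπ : ∀ k ≤ M, AnalyticAt ℂ (π k) z₀ := fun k hk =>
    Finset.analyticAt_fun_prod _ fun i hi => (hx M le_rfl).sub (hx i (by simp at hi; omega))
  have hF : ∀ k ≤ M, AnalyticAt ℂ (F k) z₀ := fun k hk =>
    analyticAt_divDiff hP hN fun t => hx t (by omega)
  have hπM : π M z₀ ≠ 0 :=
    prod_ne_zero_iff.2 fun i hi => sub_ne_zero.2 (hsep i (mem_range.1 hi)).symm
  have newton : π M * F M = fun ζ => (P ζ).eval (x M ζ) - ∑ k ∈ range M, π k ζ * F k ζ := by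
    funext ζ
    simp only [Pi.mul_apply, π, F, eval_eq_newton (P ζ) (fun i => x i ζ) M]
    ring
  rw [← analyticOrderAt_mul_of_ne_zero (hπ M le_rfl) hπM (hF M le_rfl), newton]
  refine (le_min heval (le_analyticOrderAt_sum fun k hk => ?_)).trans le_analyticOrderAt_sub
  have hk := mem_range.1 hk
  rw [show (fun ζ => π k ζ * F k ζ) = π k * F k from rfl,
    analyticOrderAt_mul (hπ k hk.le) (hF k hk.le)]
  exact (hlow k hk).trans le_add_self

lemma card_filter_Icc_le_add (p : ℕ → Prop) [DecidablePred p] {a b : ℕ} (c : ℕ) :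
    #((Icc a c).filter p) ≤ #((Icc b c).filter p) + (b - a) := by
  have hsub : (Icc a c).filter p ⊆ (Icc b c).filter p ∪ Ico a b := by
    intro j hj
    rw [mem_filter, mem_Icc] at hj
    rw [mem_union, mem_filter, mem_Icc, mem_Ico]
    by_cases hbj : b ≤ j
    · exact .inl ⟨⟨hbj, hj.1.2⟩, hj.2⟩
    · exact .inr ⟨hj.1.1, by omega⟩
  calc #((Icc a c).filter p) ≤ #((Icc b c).filter p ∪ Ico a b) := card_le_card hsub
    _ ≤ _ := (card_union_le _ _).trans_eq (by rw [Nat.card_Ico])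

lemma dIdx_le_self {m : ℕ} (B : Matrix (Fin m) (Fin m) ℂ) {i : ℕ} (hi : 1 ≤ i) : dIdx B i ≤ i := by
  have := card_filter_le (Icc (m - i + 2) m)
    fun j => ∀ (h1 : j - 2 < m) (h2 : j - 1 < m), B ⟨j - 2, h1⟩ ⟨j - 1, h2⟩ = 0
  rw [Nat.card_Icc] at this
  unfold dIdx
  omega

lemma dIdx_add_le {m : ℕ} (B : Matrix (Fin m) (Fin m) ℂ) (i k : ℕ) :
    dIdx B (i + k) ≤ dIdx B i + k := by
  unfold dIdx
  rw [add_assoc, add_le_add_iff_left]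
  exact (card_filter_Icc_le_add _ (b := m - i + 2) m).trans (by omega)

lemma dIdx_le_add_of_forall_lt {m : ℕ} (B : Matrix (Fin m) (Fin m) ℂ) (hm : 0 < m)
    {e : ℕ → ℕ∞} (he : ∀ i < m, (dIdx B (m - i) : ℕ∞) ≤ e i) (i : ℕ) :
    (dIdx B m : ℕ∞) ≤ e i + i := by
  rcases lt_or_ge i m with hi | hi
  · calc (dIdx B m : ℕ∞) ≤ (dIdx B (m - i) + i : ℕ) := by
          exact_mod_cast Nat.sub_add_cancel hi.le ▸ dIdx_add_le B (m - i) i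
      _ ≤ e i + i := by push_cast; gcongr; exact he i hi
  · exact (Nat.cast_le.2 ((dIdx_le_self B hm).trans hi)).trans le_add_self

lemma natDegree_Pv_le (n : ℕ) (v : Fin n → ℂ) : (Pv n v).natDegree ≤ n :=
  natDegree_add_le_of_degree_le (natDegree_X_pow_le n) <| natDegree_sum_le_of_forall_le _ _
    fun _ _ => (natDegree_C_mul_X_pow_le _ _).trans (Nat.sub_le _ _)

lemma analyticAt_coeff_Pv {n : ℕ} {φ : ℂ → Fin n → ℂ} {z₀ : ℂ} (hφ : AnalyticAt ℂ φ z₀) (j : ℕ) :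
    AnalyticAt ℂ (fun ζ => (Pv n (φ ζ)).coeff j) z₀ := by
  have := analyticAt_pi_iff.1 hφ
  simp only [Pv, coeff_add, finsetSum_coeff, coeff_C_mul]
  fun_prop

theorem statement9_general (n s : ℕ) (h0 : 0 < s) (h1 : 1 < s) (m : Fin s → ℕ) (lam : Fin s → ℂ)
    (B : ∀ j : Fin s, Matrix (Fin (m j)) (Fin (m j)) ℂ)
    (A : Matrix (Fin n) (Fin n) ℂ) (hBJ : IsBlockJordan m lam B A)
    (hlam : lam ⟨1, h1⟩ ≠ lam ⟨0, h0⟩)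
    (φ : ℂ → Fin n → ℂ) (hφ : DifferentiableOn ℂ φ unitDisc)
    (hstar : StarConditions m lam B φ 0)
    (φd : ℕ → ℂ → ℂ)
    (hφd : ∀ i, 1 ≤ i → i ≤ m ⟨0, h0⟩ →
      DifferentiableOn ℂ (φd i) unitDisc ∧ φd i 0 = lam ⟨0, h0⟩)
    (hψ : DifferentiableOn ℂ (φd (m ⟨0, h0⟩ + 1)) unitDisc ∧
      φd (m ⟨0, h0⟩ + 1) 0 = lam ⟨1, h1⟩)
    (d : ℕ) (hd : dIdx (B ⟨1, h1⟩) (m ⟨1, h1⟩) ≤ d)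
    (hhyp : ∀ k < m ⟨0, h0⟩,
      VanishesToOrder
        (fun ζ => divDiff (Pv n (φ ζ)) k (fun t : Fin (k + 1) => φd ((t : ℕ) + 1) ζ)) 0 d) :
    VanishesToOrder
      (fun ζ => divDiff (Pv n (φ ζ)) (m ⟨0, h0⟩)
        (fun t : Fin (m ⟨0, h0⟩ + 1) => φd ((t : ℕ) + 1) ζ)) 0
      (dIdx (B ⟨1, h1⟩) (m ⟨1, h1⟩)) := by
  have hdisc : unitDisc ∈ 𝓝 (0 : ℂ) := Metric.ball_mem_nhds 0 one_pos
  have hP := analyticAt_coeff_Pv (hφ.analyticAt hdisc)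
  have hN := fun ζ => natDegree_Pv_le n (φ ζ)
  have hx : ∀ i ≤ m ⟨0, h0⟩, AnalyticAt ℂ (φd (i + 1)) 0 := by
    intro i hi
    rcases hi.lt_or_eq with hi | rfl
    · exact (hφd (i + 1) (by omega) hi).1.analyticAt hdisc
    · exact hψ.1.analyticAt hdisc
  have hnodes : ∀ k ≤ m ⟨0, h0⟩, AnalyticAt ℂ
      (fun ζ => divDiff (Pv n (φ ζ)) k (fun t : Fin (k + 1) => φd ((t : ℕ) + 1) ζ)) 0 :=
    fun k hk => analyticAt_divDiff hP hN fun t => hx t (by omega)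
  rw [vanishesToOrder_iff (hnodes _ le_rfl)]
  refine le_analyticOrderAt_divDiff (x := fun i => φd (i + 1)) hP hN hx
    (fun i hi => by rw [(hφd (i + 1) (by omega) hi).2, hψ.2]; exact hlam.symm) ?_
    fun k hk => (Nat.cast_le.2 hd).trans ((vanishesToOrder_iff (hnodes k hk.le)).1 (hhyp k hk))
  obtain ⟨-, -, hmpos, -⟩ := hBJ
  exact le_analyticOrderAt_eval hP hN (hx _ le_rfl) hψ.2 <| dIdx_le_add_of_forall_lt _ (hmpos _)
    fun i hi => (vanishesToOrder_iff (analyticAt_eval_polyDeriv hP hN i _)).1 (hstar ⟨1, h1⟩ i hi)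

/-- Lemma 4.6(b): the `m_1`-th divided difference with an extra node tending
to `λ_2` vanishes to order `d_{m_2}(B_2)`. -/
theorem statement9 (n s : ℕ) (h0 : 0 < s) (h1 : 1 < s) (m : Fin s → ℕ) (lam : Fin s → ℂ)
    (B : ∀ j : Fin s, Matrix (Fin (m j)) (Fin (m j)) ℂ)
    (A : Matrix (Fin n) (Fin n) ℂ) (hBJ : IsBlockJordan m lam B A)
    (hAΩ : A ∈ SpectralBall n)
    (hlam : lam ⟨1, h1⟩ ≠ lam ⟨0, h0⟩)
    (φ : ℂ → Fin n → ℂ) (hφ : DifferentiableOn ℂ φ unitDisc)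
    (hφG : Set.MapsTo φ unitDisc (SymPolydisc n))
    (hstar : StarConditions m lam B φ 0)
    (φd : ℕ → ℂ → ℂ)
    (hφd : ∀ i, 1 ≤ i → i ≤ m ⟨0, h0⟩ →
      DifferentiableOn ℂ (φd i) unitDisc ∧ φd i 0 = lam ⟨0, h0⟩)
    (hψ : DifferentiableOn ℂ (φd (m ⟨0, h0⟩ + 1)) unitDisc ∧
      φd (m ⟨0, h0⟩ + 1) 0 = lam ⟨1, h1⟩)
    (d : ℕ) (hd : dIdx (B ⟨1, h1⟩) (m ⟨1, h1⟩) ≤ d)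
    (hhyp : ∀ k < m ⟨0, h0⟩,
      VanishesToOrder
        (fun ζ => divDiff (Pv n (φ ζ)) k (fun t : Fin (k + 1) => φd ((t : ℕ) + 1) ζ)) 0 d) :
    VanishesToOrder
      (fun ζ => divDiff (Pv n (φ ζ)) (m ⟨0, h0⟩)
        (fun t : Fin (m ⟨0, h0⟩ + 1) => φd ((t : ℕ) + 1) ζ)) 0
      (dIdx (B ⟨1, h1⟩) (m ⟨1, h1⟩)) :=
  statement9_general n s h0 h1 m lam B A hBJ hlam φ hφ hstar φd hφd hψ d hd hhyp
end PolynomialFamily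
end

section
/- Let k, l ≥ 2 be integers, n = k + l, let λ_1 ≠ λ_2 be complex numbers, let ε ∈ ℂ \ {0}, and define φ : D → ℂ^n by φ(ζ) := π(diag(B_k^{λ_1}(εζ), B_l^{λ_2}(εζ))). Then for every holomorphic function g defined on a neighborhood of 0 with g(0) = λ_1, the holomorphic function ζ ↦ P_{[φ(ζ)]}(g(ζ)) vanishes at 0 to order exactly k − 1. -/
/-!
Expanding along the first column, only the diagonal entry and the corner entry of
`tI - B_k^λ(ζ)` contribute, so `det(tI - B_k^λ(ζ)) = (t - λ)^k - ζ^(k-1)` and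
`P_{[φ(ζ)]}(t) = ((t - λ₁)^k - (εζ)^(k-1)) ((t - λ₂)^l - (εζ)^(l-1))`.
Writing `g(ζ) - λ₁ = ζ h(ζ)` with `h` holomorphic, the first factor at `t = g(ζ)` is
`ζ^(k-1) (ζ h(ζ)^k - ε^(k-1))`. Hence `P_{[φ(ζ)]}(g(ζ)) = ζ^(k-1) u(ζ)` with `u` holomorphic
and `u(0) = -ε^(k-1) (λ₁ - λ₂)^l ≠ 0`, and by Leibniz's rule the derivatives of `ζ^(k-1) u(ζ)`
at `0` of order `< k - 1` vanish while the one of order `k - 1` is `(k-1)! u(0)`.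
-/

open Polynomial

section PowMul

variable {𝕜 : Type*} [NontriviallyNormedField 𝕜] {u : 𝕜 → 𝕜} {m i : ℕ}

theorem iteratedDeriv_pow_mul_zero (hu : ContDiffAt 𝕜 i u 0) :
    iteratedDeriv i (fun z => z ^ m * u z) 0 =
      ∑ j ∈ Finset.range (i + 1),
        i.choose j * (m.descFactorial j * 0 ^ (m - j)) * iteratedDeriv (i - j) u 0 := by
  rw [show (fun z => z ^ m * u z) = (· ^ m) * u from rfl,
    iteratedDeriv_mul (contDiffAt_fun_id.pow m) hu]
  simp only [iteratedDeriv_pow]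

theorem iteratedDeriv_pow_mul_zero_of_lt (hi : i < m) (hu : ContDiffAt 𝕜 i u 0) :
    iteratedDeriv i (fun z => z ^ m * u z) 0 = 0 := by
  rw [iteratedDeriv_pow_mul_zero hu]
  refine Finset.sum_eq_zero fun j hj => ?_
  simp only [zero_pow (show m - j ≠ 0 by grind), mul_zero, zero_mul]

theorem iteratedDeriv_pow_mul_zero_self (hu : ContDiffAt 𝕜 m u 0) :
    iteratedDeriv m (fun z => z ^ m * u z) 0 = m.factorial * u 0 := by
  rw [iteratedDeriv_pow_mul_zero hu, Finset.sum_eq_single_of_mem m (by simp) fun j hj hjm => by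
    simp only [zero_pow (show m - j ≠ 0 by grind), mul_zero, zero_mul]]
  simp [Nat.descFactorial_self]

end PowMul

theorem Pv_piCoef (n : ℕ) (A : Matrix (Fin n) (Fin n) ℂ) : Pv n (piCoef n A) = A.charpoly := by
  have hdeg : A.charpoly.natDegree = n := by
    rw [A.charpoly_natDegree_eq_dim, Fintype.card_fin]
  conv_rhs => rw [A.charpoly_monic.as_sum, hdeg]
  rw [Pv, ← Finset.sum_range_reflect, ← Fin.sum_univ_eq_sum_range (fun j => C (A.charpoly.coeff (n - 1 - j)) * X ^ (n - 1 - j))]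
  congr 1
  refine Finset.sum_congr rfl fun i _ => ?_
  rw [piCoef, ← mul_assoc, ← pow_add, Even.neg_one_pow ⟨_, rfl⟩, one_mul,
    show n - 1 - (i : ℕ) = n - ((i : ℕ) + 1) by omega]

theorem charmatrix_Bmat_apply (m : ℕ) (lam ζ : ℂ) (i j : Fin (m + 2)) :
    (Bmat (m + 2) lam ζ).charmatrix i j =
      if j = i then X - C lam
      else if (j : ℕ) = i + 1 then -C (if (i : ℕ) = m then 1 else ζ)
      else if (i : ℕ) = m + 1 ∧ (j : ℕ) = 0 then -C ζ
      else 0 := by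
  by_cases hij : j = i
  · subst hij
    simp [Matrix.charmatrix_apply_eq, Bmat]
  · rw [Matrix.charmatrix_apply_ne _ _ _ (Ne.symm hij), if_neg hij]
    simp only [Bmat, Matrix.of_apply, Fin.val_eq_val, hij, if_false, Nat.add_sub_cancel,
      show m + 2 - 1 = m + 1 from rfl]
    split_ifs <;> simp

theorem charmatrix_Bmat_apply_zero_of_ne (m : ℕ) (lam ζ : ℂ) {i : Fin (m + 2)} (h0 : i ≠ 0)
    (hlast : i ≠ Fin.last (m + 1)) : (Bmat (m + 2) lam ζ).charmatrix i 0 = 0 := by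
  have h0 : (i : ℕ) ≠ 0 := Fin.val_ne_iff.mpr h0
  have hlast : (i : ℕ) ≠ m + 1 := Fin.val_ne_iff.mpr hlast
  rw [charmatrix_Bmat_apply, if_neg (Fin.val_ne_iff.mp h0.symm), if_neg (by simp),
    if_neg (by simp [hlast])]

theorem det_charmatrix_Bmat_submatrix_succ_succ (m : ℕ) (lam ζ : ℂ) :
    ((Bmat (m + 2) lam ζ).charmatrix.submatrix Fin.succ Fin.succ).det = (X - C lam) ^ (m + 1) := by
  have htri : ((Bmat (m + 2) lam ζ).charmatrix.submatrix Fin.succ Fin.succ).IsUpperTriangular := by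
    intro a b hab
    have hab : (b : ℕ) < a := hab
    simp only [Matrix.submatrix_apply, charmatrix_Bmat_apply, Fin.ext_iff, Fin.val_succ]
    rw [if_neg (by omega), if_neg (by omega), if_neg (by omega)]
  rw [Matrix.det_of_isUpperTriangular htri]
  simp only [Matrix.submatrix_apply, charmatrix_Bmat_apply]
  simp

theorem det_charmatrix_Bmat_submatrix_castSucc_succ (m : ℕ) (lam ζ : ℂ) :
    ((Bmat (m + 2) lam ζ).charmatrix.submatrix Fin.castSucc Fin.succ).det = -(-C ζ) ^ m := by
  have htri :
      ((Bmat (m + 2) lam ζ).charmatrix.submatrix Fin.castSucc Fin.succ).IsLowerTriangular := by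
    intro a b hab
    have hab : (a : ℕ) < b := hab
    simp only [Matrix.submatrix_apply, charmatrix_Bmat_apply, Fin.ext_iff, Fin.val_succ,
      Fin.val_castSucc]
    rw [if_neg (by omega), if_neg (by omega), if_neg (by omega)]
  rw [Matrix.det_of_isLowerTriangular _ htri, Fin.prod_univ_castSucc]
  simp only [Matrix.submatrix_apply, charmatrix_Bmat_apply]
  simp [Fin.ext_iff, fun x : Fin m => x.isLt.ne]

theorem charpoly_Bmat (m : ℕ) (lam ζ : ℂ) :
    (Bmat (m + 2) lam ζ).charpoly = (X - C lam) ^ (m + 2) - C (ζ ^ (m + 1)) := by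
  rw [Matrix.charpoly, Matrix.det_succ_column_zero,
    Fintype.sum_eq_add 0 (Fin.last (m + 1)) (Fin.last_pos.ne) fun i hi => by
      rw [charmatrix_Bmat_apply_zero_of_ne m lam ζ hi.1 hi.2, mul_zero, zero_mul],
    Fin.succAbove_zero, Fin.succAbove_last, det_charmatrix_Bmat_submatrix_succ_succ,
    det_charmatrix_Bmat_submatrix_castSucc_succ, charmatrix_Bmat_apply, charmatrix_Bmat_apply]
  simp only [Fin.val_zero, Fin.val_last, if_true, if_neg (Fin.last_pos.ne)]
  rw [if_neg (by omega), if_pos ⟨trivial, trivial⟩, neg_pow (C ζ), map_pow]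
  have hsign : ((-1) ^ (m + 1) * (-1) ^ m : ℂ[X]) = -1 := by
    rw [← pow_add, show m + 1 + m = 2 * m + 1 by ring, pow_succ, pow_mul, neg_one_sq, one_pow,
      one_mul]
  linear_combination C ζ ^ (m + 1) * hsign

theorem charpoly_BmatPair (a b : ℕ) (lam1 lam2 ζ : ℂ) :
    (BmatPair (a + 2) (b + 2) lam1 lam2 ζ).charpoly =
      ((X - C lam1) ^ (a + 2) - C (ζ ^ (a + 1))) * ((X - C lam2) ^ (b + 2) - C (ζ ^ (b + 1))) := by
  rw [BmatPair, Matrix.charpoly_reindex, Matrix.charpoly_fromBlocks_zero₂₁, charpoly_Bmat,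
    charpoly_Bmat]

/-- for `φ(ζ) = π(diag(B_k^{λ_1}(εζ), B_l^{λ_2}(εζ)))` and any `g`
holomorphic near `0` with `g(0) = λ_1`, the function `ζ ↦ P_{[φ(ζ)]}(g(ζ))` vanishes
at `0` to order exactly `k - 1`. -/
theorem statement15 (k l : ℕ) (hk : 2 ≤ k) (hl : 2 ≤ l)
    (lam1 lam2 : ℂ) (hne : lam1 ≠ lam2) (ε : ℂ) (hε : ε ≠ 0)
    (g : ℂ → ℂ) (U : Set ℂ) (hU : U ∈ nhds (0 : ℂ))
    (hg : DifferentiableOn ℂ g U) (hg0 : g 0 = lam1) :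
    VanishesToOrder
      (fun ζ => (Pv (k + l) (piCoef (k + l) (BmatPair k l lam1 lam2 (ε * ζ)))).eval (g ζ))
      0 (k - 1) ∧
    iteratedDeriv (k - 1)
      (fun ζ => (Pv (k + l) (piCoef (k + l) (BmatPair k l lam1 lam2 (ε * ζ)))).eval (g ζ))
      0 ≠ 0 := by
  obtain ⟨m, rfl⟩ : ∃ m, k = m + 2 := ⟨k - 2, by omega⟩
  obtain ⟨b, rfl⟩ : ∃ b, l = b + 2 := ⟨l - 2, by omega⟩
  have hga : AnalyticAt ℂ g 0 := hg.analyticAt hU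
  set h := dslope g 0
  have hh : AnalyticAt ℂ h 0 :=
    let ⟨_, hp⟩ := hga
    ⟨_, hp.has_fpower_series_dslope_fslope⟩
  have hgh : ∀ ζ, g ζ - lam1 = ζ * h ζ := fun ζ => by
    simpa [hg0] using (sub_smul_dslope g 0 ζ).symm
  set u : ℂ → ℂ := fun ζ =>
    (ζ * h ζ ^ (m + 2) - ε ^ (m + 1)) * ((g ζ - lam2) ^ (b + 2) - (ε * ζ) ^ (b + 1))
  have hu : ContDiffAt ℂ (m + 1) u 0 := by
    refine AnalyticAt.contDiffAt ?_
    fun_prop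
  have hu0 : u 0 ≠ 0 := by
    simp [u, hg0, hε, sub_eq_zero, hne]
  have hfactor : (fun ζ => (Pv (m + 2 + (b + 2))
      (piCoef _ (BmatPair (m + 2) (b + 2) lam1 lam2 (ε * ζ)))).eval (g ζ)) =
      fun ζ => ζ ^ (m + 1) * u ζ := by
    funext ζ
    simp only [Pv_piCoef, charpoly_BmatPair, eval_mul, eval_sub, eval_pow, eval_X, eval_C, hgh, u]
    ring
  rw [hfactor, show m + 2 - 1 = m + 1 from rfl]
  refine ⟨fun i hi => iteratedDeriv_pow_mul_zero_of_lt hi (hu.of_le (by exact_mod_cast hi.le)), ?_⟩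
  rw [iteratedDeriv_pow_mul_zero_self hu]
  exact mul_ne_zero (Nat.cast_ne_zero.mpr (Nat.factorial_ne_zero _)) hu0
end
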